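/- arXiv:2210.02394 — 2 statements merged into one kernel-verified Lean document; each statement's English description precedes it below -/
import Mathlib

section
/- For every n ≥ 72 divisible by 8, the signed graph J'_n is jammed. -/
open Finset

/-- A signed graph on `n` vertices: `true` = friendship (+1), `false` = enmity (−1). -/
abbrev SignedGraph (n : ℕ) := Fin n → Fin n → Bool

/-- The sign assignment is symmetric (it is an assignment to undirected edges). -/
def Symm {n : ℕ} (G : SignedGraph n) : Prop := ∀ u v, G u v = G v u

/-- The triad `{u,v,w}` is balanced: it contains an even number (0 or 2) of enmity edges. -/
def BalancedTriad {n : ℕ} (G : SignedGraph n) (u v w : Fin n) : Prop :=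
  Bool.xor (G u v) (Bool.xor (G v w) (G u w)) = true

instance {n : ℕ} (G : SignedGraph n) (u v w : Fin n) :
    Decidable (BalancedTriad G u v w) :=
  inferInstanceAs (Decidable (_ = true))

/-- The rank of the edge `(u,v)`: the number of imbalanced triads containing it. -/
def rank {n : ℕ} (G : SignedGraph n) (u v : Fin n) : ℕ :=
  (univ.filter (fun w => w ≠ u ∧ w ≠ v ∧ ¬ BalancedTriad G u v w)).card

/-- A signed graph is balanced if every triad is balanced. -/
def IsBalanced {n : ℕ} (G : SignedGraph n) : Prop :=
  ∀ u v w : Fin n, u ≠ v → v ≠ w → u ≠ w → BalancedTriad G u v w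

/-- A signed graph is jammed if it is not balanced and every edge `e`
satisfies `2 * r_e < n - 2`. -/
def IsJammed {n : ℕ} (G : SignedGraph n) : Prop :=
  ¬ IsBalanced G ∧ ∀ u v : Fin n, u ≠ v → 2 * rank G u v < n - 2

/-- Flipping (reversing the sign of) the undirected edge `p`. -/
def flipEdge {n : ℕ} (G : SignedGraph n) (p : Sym2 (Fin n)) : SignedGraph n :=
  fun x y => if s(x, y) = p then !(G x y) else G x y

/-- A CTD-admissible flipEdge: the edge lies in some imbalanced triad and `2 r_e ≥ n - 2`. -/
def CTDAdmissible {n : ℕ} (G : SignedGraph n) (p : Sym2 (Fin n)) : Prop :=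
  ∃ u v : Fin n, p = s(u, v) ∧ u ≠ v ∧
    (∃ w, w ≠ u ∧ w ≠ v ∧ ¬ BalancedTriad G u v w) ∧
    n - 2 ≤ 2 * rank G u v

/-- A BED-admissible flipEdge: there is an imbalanced triad containing the edge
in which the edge has maximal rank. -/
def BEDAdmissible {n : ℕ} (G : SignedGraph n) (p : Sym2 (Fin n)) : Prop :=
  ∃ u v w : Fin n, p = s(u, v) ∧ u ≠ v ∧ w ≠ u ∧ w ≠ v ∧
    ¬ BalancedTriad G u v w ∧
    rank G v w ≤ rank G u v ∧ rank G u w ≤ rank G u v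

/-- `FlipSeq Adm G L H`: the list of edges `L` is a sequence of `Adm`-admissible flips
transforming `G` into `H`. -/
inductive FlipSeq {n : ℕ} (Adm : SignedGraph n → Sym2 (Fin n) → Prop) :
    SignedGraph n → List (Sym2 (Fin n)) → SignedGraph n → Prop
  | nil (G : SignedGraph n) : FlipSeq Adm G [] G
  | cons {G H : SignedGraph n} {L : List (Sym2 (Fin n))} (p : Sym2 (Fin n)) :
      Adm G p → FlipSeq Adm (flipEdge G p) L H → FlipSeq Adm G (p :: L) H

/-- Circular distance between cluster indices. -/
def circDist {m : ℕ} (i j : Fin m) : ℕ := min (i - j : Fin m).val (j - i : Fin m).val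

/-- The circular graph: given a cluster assignment `c`, an edge is a friendship iff
its endpoints lie in clusters at circular distance at most `k`. -/
def circular {n m : ℕ} (c : Fin n → Fin m) (k : ℕ) : SignedGraph n :=
  fun u v => decide (circDist (c u) (c v) ≤ k)

/-- The jammed state `J_n`: three fixed clusters of size `n/3`, friendships inside
clusters, enmities across. -/
def Jn (n : ℕ) : SignedGraph n :=
  fun u v => decide (u.val / (n / 3) = v.val / (n / 3))

/-- The signed graph obtained from `G` by flipping exactly the edges in `F`. -/
def perturb {n : ℕ} (G : SignedGraph n) (F : Finset (Sym2 (Fin n))) : SignedGraph n :=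
  fun u v => if s(u, v) ∈ F then !(G u v) else G u v

/-- The set of (undirected, non-diagonal) edges on which two signed graphs differ. -/
def diffEdges {n : ℕ} (G C : SignedGraph n) : Finset (Sym2 (Fin n)) :=
  univ.filter (fun p => ∃ u v : Fin n, p = s(u, v) ∧ u ≠ v ∧ G u v ≠ C u v)

/-- `C` is a closest balanced state to `G`: `C` is balanced and minimizes the number of
edges on which the signs differ from `G`. -/
def IsClosestBalanced {n : ℕ} (G C : SignedGraph n) : Prop :=
  Symm C ∧ IsBalanced C ∧
    ∀ C' : SignedGraph n, Symm C' → IsBalanced C' →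
      (diffEdges G C).card ≤ (diffEdges G C').card

/-- The two sides of the balanced state `B_n`: clusters `0, 1, 5` versus `2, 3, 4`. -/
def sixPart (i : Fin 6) : Bool := decide (i = 0 ∨ i = 1 ∨ i = 5)

/-- The balanced state `B_n` whose friendship parts are `V₀ ∪ V₁ ∪ V₅` and `V₂ ∪ V₃ ∪ V₄`. -/
def Bgraph {n : ℕ} (c : Fin n → Fin 6) : SignedGraph n :=
  fun u v => sixPart (c u) == sixPart (c v)

/-- The number of good triads containing the red edge `(u,v)`: imbalanced triads in which
the red edge has strictly greater rank than each of the other two edges. -/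
def goodCount {n : ℕ} (G : SignedGraph n) (u v : Fin n) : ℕ :=
  (univ.filter (fun w => w ≠ u ∧ w ≠ v ∧ ¬ BalancedTriad G u v w ∧
    rank G v w < rank G u v ∧ rank G u w < rank G u v)).card

/-- The number of bad triads containing the red edge `(u,v)`: imbalanced triads that
are not good. -/
def badCount {n : ℕ} (G : SignedGraph n) (u v : Fin n) : ℕ :=
  (univ.filter (fun w => w ≠ u ∧ w ≠ v ∧ ¬ BalancedTriad G u v w ∧
    ¬ (rank G v w < rank G u v ∧ rank G u w < rank G u v))).card

/-!
The signs of `J'_n` depend only on the clusters, so whether a triad is balanced is decided on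
the 6-cycle of clusters. There, clusters `0, 2, 4` form an all-enmity triad, and for each pair of
clusters at most two clusters complete it to an imbalanced triad. Since every cluster has at most
`n/4 - 2` vertices, every rank is at most `n/2 - 4 < (n - 2)/2`.
-/

def comap {n m : ℕ} (c : Fin n → Fin m) (S : SignedGraph m) : SignedGraph n :=
  fun u v => S (c u) (c v)

section Comap

variable {n m : ℕ} (c : Fin n → Fin m) (S : SignedGraph m)

theorem circular_eq_comap (k : ℕ) : circular c k = comap c (circular id k) := rfl

theorem not_isBalanced_comap {i j k : Fin m} (hij : i ≠ j) (hjk : j ≠ k) (hik : i ≠ k)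
    (hi : i ∈ Set.range c) (hj : j ∈ Set.range c) (hk : k ∈ Set.range c)
    (hS : ¬ BalancedTriad S i j k) : ¬ IsBalanced (comap c S) := by
  obtain ⟨u, rfl⟩ := hi
  obtain ⟨v, rfl⟩ := hj
  obtain ⟨w, rfl⟩ := hk
  exact fun hG => hS (hG u v w (ne_of_apply_ne c hij) (ne_of_apply_ne c hjk)
    (ne_of_apply_ne c hik))

theorem rank_comap_le_sum (u v : Fin n) :
    rank (comap c S) u v ≤
      ∑ k ∈ univ.filter (fun k => ¬ BalancedTriad S (c u) (c v) k), #(univ.filter (c · = k)) := by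
  rw [← card_biUnion fun k _ l _ hkl => disjoint_filter.mpr fun w _ hk hl => hkl (hk ▸ hl)]
  refine card_le_card fun w hw => ?_
  simp only [mem_filter, mem_univ, true_and, mem_biUnion, exists_eq_right'] at hw ⊢
  exact hw.2.2

theorem rank_comap_le_mul {t b : ℕ}
    (hS : ∀ i j, #(univ.filter (fun k => ¬ BalancedTriad S i j k)) ≤ t)
    (hc : ∀ k, #(univ.filter (c · = k)) ≤ b) (u v : Fin n) :
    rank (comap c S) u v ≤ t * b :=
  calc rank (comap c S) u v
      ≤ ∑ k ∈ univ.filter (fun k => ¬ BalancedTriad S (c u) (c v) k), #(univ.filter (c · = k)) :=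
        rank_comap_le_sum c S u v
    _ ≤ #(univ.filter (fun k => ¬ BalancedTriad S (c u) (c v) k)) * b :=
        sum_le_card_nsmul _ _ _ fun k _ => hc k
    _ ≤ t * b := Nat.mul_le_mul_right b (hS _ _)

end Comap

theorem card_imbalanced_circular_six_le_two (i j : Fin 6) :
    #(univ.filter (fun k => ¬ BalancedTriad (circular id 1) i j k)) ≤ 2 := by
  revert i j
  decide

theorem not_balancedTriad_circular_six :
    ¬ BalancedTriad (circular (id : Fin 6 → Fin 6) 1) 0 2 4 := by
  decide

theorem Jn'_jammed_general (n : ℕ) (hn : 72 ≤ n) (c : Fin n → Fin 6)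
    (hc0 : (univ.filter (fun u => c u = 0)).card = n / 4 - 2)
    (hc3 : (univ.filter (fun u => c u = 3)).card = n / 4 - 2)
    (hc1 : (univ.filter (fun u => c u = 1)).card = n / 8 + 1)
    (hc2 : (univ.filter (fun u => c u = 2)).card = n / 8 + 1)
    (hc4 : (univ.filter (fun u => c u = 4)).card = n / 8 + 1)
    (hc5 : (univ.filter (fun u => c u = 5)).card = n / 8 + 1) :
    IsJammed (circular c 1) := by
  have mem_range : ∀ k, 0 < #(univ.filter (c · = k)) → k ∈ Set.range c := fun k h =>
    let ⟨u, hu⟩ := card_pos.mp h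
    ⟨u, (mem_filter.mp hu).2⟩
  have hfiber : ∀ k, #(univ.filter (c · = k)) ≤ n / 4 - 2 := by
    intro k
    fin_cases k
    exacts [hc0.le, hc1.trans_le (by omega), hc2.trans_le (by omega), hc3.le,
      hc4.trans_le (by omega), hc5.trans_le (by omega)]
  rw [circular_eq_comap]
  refine ⟨not_isBalanced_comap c _ (by decide) (by decide) (by decide) (mem_range 0 (by omega))
    (mem_range 2 (by omega)) (mem_range 4 (by omega)) not_balancedTriad_circular_six,
    fun u v _ => ?_⟩
  have := rank_comap_le_mul c _ card_imbalanced_circular_six_le_two hfiber u v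
  omega

/-- For `n ≥ 72` divisible by `8`, the state `J'_n` (six clusters of sizes
`x, y, y, x, y, y` with `x = n/4 - 2`, `y = n/8 + 1` on a cycle, friendships within
circular distance 1) is jammed. -/
theorem Jn'_jammed (n : ℕ) (hn : 72 ≤ n) (h8 : 8 ∣ n) (c : Fin n → Fin 6)
    (hc0 : (univ.filter (fun u => c u = 0)).card = n / 4 - 2)
    (hc3 : (univ.filter (fun u => c u = 3)).card = n / 4 - 2)
    (hc1 : (univ.filter (fun u => c u = 1)).card = n / 8 + 1)
    (hc2 : (univ.filter (fun u => c u = 2)).card = n / 8 + 1)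
    (hc4 : (univ.filter (fun u => c u = 4)).card = n / 8 + 1)
    (hc5 : (univ.filter (fun u => c u = 5)).card = n / 8 + 1) :
    IsJammed (circular c 1) :=
  Jn'_jammed_general n hn c hc0 hc3 hc1 hc2 hc4 hc5
end

section
/- Let n ≥ 72 be divisible by 8, let J'_n, B_n and E_0 be as defined, and let F ⊆ E_0. Consider the signed graph G_F that differs from the balanced state B_n exactly on the edges of F (the red edges). Then: (a) no triad of G_F has all three of its edges in F; (b) every edge in F has rank at least n/2 − 4 in G_F; (c) every edge not in E_0 has rank at most n/4 + 2 in G_F; and consequently (d) in every imbalanced triad of G_F, every edge of maximal rank within that triad belongs to E_0. -/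
open Finset

/-!
Since `B_n` is balanced, a triad of `perturb B_n F` is imbalanced exactly when it contains an odd
number of edges of `F`. The edges of `E₀` join clusters along the 4-cycle `V₁ V₂ V₄ V₅`, which has
no triangle, and never touch `V₀ ∪ V₃`. Hence an edge of `F` forms an imbalanced triad with every
vertex of `V₀ ∪ V₃`, so its rank is at least `2x = n/2 - 4`; an edge outside `E₀` lies only in
imbalanced triads through an edge of `F`, whose third vertex lies in one of two clusters of size
`y`, so its rank is at most `2y = n/4 + 2`. As `n/4 + 2 < n/2 - 4`, a maximal-rank edge of an
imbalanced triad cannot lie outside `E₀`.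
-/

section Perturb

variable {n : ℕ} {G : SignedGraph n} {F : Finset (Sym2 (Fin n))} {u v w : Fin n}

theorem not_balancedTriad_perturb_iff (hG : BalancedTriad G u v w) :
    ¬ BalancedTriad (perturb G F) u v w ↔
      Xor (s(u, v) ∈ F) (Xor (s(v, w) ∈ F) (s(u, w) ∈ F)) := by
  unfold BalancedTriad perturb at *
  by_cases h₁ : s(u, v) ∈ F <;> by_cases h₂ : s(v, w) ∈ F <;> by_cases h₃ : s(u, w) ∈ F <;>
    simp only [h₁, h₂, h₃, if_true, if_false, xor_true, xor_false, id] <;>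
    revert hG <;> cases G u v <;> cases G v w <;> cases G u w <;> decide

theorem mem_or_mem_of_not_balancedTriad_perturb (hG : BalancedTriad G u v w)
    (h : ¬ BalancedTriad (perturb G F) u v w) (huv : s(u, v) ∉ F) :
    s(v, w) ∈ F ∨ s(u, w) ∈ F := by
  rw [not_balancedTriad_perturb_iff hG] at h
  by_contra! h'
  simp [huv, h'.1, h'.2] at h

theorem card_le_rank_perturb (hG : ∀ w, BalancedTriad G u v w) (huv : s(u, v) ∈ F)
    {S : Finset (Fin n)} (hS : ∀ w ∈ S, w ≠ u ∧ w ≠ v ∧ s(v, w) ∉ F ∧ s(u, w) ∉ F) :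
    #S ≤ rank (perturb G F) u v := by
  refine card_le_card fun w hw => ?_
  obtain ⟨hwu, hwv, hvw, huw⟩ := hS w hw
  simp [hwu, hwv, not_balancedTriad_perturb_iff (hG w), huv, hvw, huw]

theorem rank_perturb_le_card (hG : ∀ w, BalancedTriad G u v w) (huv : s(u, v) ∉ F)
    {S : Finset (Fin n)} (hS : ∀ w, s(v, w) ∈ F ∨ s(u, w) ∈ F → w ∈ S) :
    rank (perturb G F) u v ≤ #S := by
  refine card_le_card fun w hw => ?_
  simp only [mem_filter, mem_univ, true_and] at hw
  exact hS w (mem_or_mem_of_not_balancedTriad_perturb (hG w) hw.2.2 huv)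

end Perturb

theorem balancedTriad_Bgraph {n : ℕ} (c : Fin n → Fin 6) (u v w : Fin n) :
    BalancedTriad (Bgraph c) u v w := by
  unfold BalancedTriad Bgraph
  cases sixPart (c u) <;> cases sixPart (c v) <;> cases sixPart (c w) <;> rfl

/-- The cluster pairs `{1,2}, {2,4}, {4,5}, {5,1}` carrying `E₀`: a 4-cycle avoiding `V₀`, `V₃`. -/
def E0Pair (i j : Fin 6) : Prop := decide (circDist i j ≤ 1) ≠ (sixPart i == sixPart j)

instance (i j : Fin 6) : Decidable (E0Pair i j) := inferInstanceAs (Decidable (_ ≠ _))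

namespace E0Pair

theorem irrefl (i : Fin 6) : ¬ E0Pair i i := by revert i; decide

theorem symm {i j : Fin 6} : E0Pair i j → E0Pair j i := by revert i j; decide

theorem not_triangle (i j k : Fin 6) : ¬ (E0Pair i j ∧ E0Pair j k ∧ E0Pair i k) := by
  revert i j k; decide

theorem not_of_eq_zero_or_eq_three (i : Fin 6) {j : Fin 6} (hj : j = 0 ∨ j = 3) :
    ¬ E0Pair i j := by
  rcases hj with rfl | rfl <;> revert i <;> decide

/-- Non-adjacent vertices of a 4-cycle have at most two neighbours between them. -/
theorem exists_cover_of_not {i j : Fin 6} : ¬ E0Pair i j → ∃ a b : Fin 6,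
    a ≠ 0 ∧ a ≠ 3 ∧ b ≠ 0 ∧ b ≠ 3 ∧ ∀ k, E0Pair i k ∨ E0Pair j k → k = a ∨ k = b := by
  revert i j; decide

end E0Pair

def E0 {n : ℕ} (c : Fin n → Fin 6) : Finset (Sym2 (Fin n)) :=
  diffEdges (circular c 1) (Bgraph c)

section Clusters

variable {n : ℕ} {c : Fin n → Fin 6} {F : Finset (Sym2 (Fin n))} {u v w : Fin n}

theorem mk_mem_E0_iff : s(u, v) ∈ E0 c ↔ E0Pair (c u) (c v) := by
  simp only [E0, diffEdges, mem_filter, mem_univ, true_and]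
  constructor
  · rintro ⟨a, b, hab, -, hd⟩
    rcases Sym2.eq_iff.mp hab with ⟨rfl, rfl⟩ | ⟨rfl, rfl⟩
    exacts [hd, E0Pair.symm hd]
  · intro hd
    exact ⟨u, v, rfl, fun h => E0Pair.irrefl (c u) (h ▸ hd), hd⟩

theorem E0Pair_of_mem (hF : F ⊆ E0 c) (h : s(u, v) ∈ F) : E0Pair (c u) (c v) :=
  mk_mem_E0_iff.mp (hF h)

theorem card_outer_le_rank_perturb_Bgraph (hF : F ⊆ E0 c) (huv : s(u, v) ∈ F) :
    #{w | c w = 0} + #{w | c w = 3} ≤ rank (perturb (Bgraph c) F) u v := by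
  have hred := E0Pair_of_mem hF huv
  rw [← card_union_of_disjoint (disjoint_filter.mpr fun w _ h0 h3 => by simp [h0] at h3),
    ← filter_or]
  refine card_le_rank_perturb (balancedTriad_Bgraph c u v) huv fun w hw => ?_
  replace hw : c w = 0 ∨ c w = 3 := by simpa using hw
  refine ⟨?_, ?_, fun h => ?_, fun h => ?_⟩
  · rintro rfl; exact E0Pair.not_of_eq_zero_or_eq_three _ hw hred.symm
  · rintro rfl; exact E0Pair.not_of_eq_zero_or_eq_three _ hw hred
  · exact E0Pair.not_of_eq_zero_or_eq_three _ hw (E0Pair_of_mem hF h)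
  · exact E0Pair.not_of_eq_zero_or_eq_three _ hw (E0Pair_of_mem hF h)

theorem rank_perturb_Bgraph_le {y : ℕ} (hF : F ⊆ E0 c) (huv : s(u, v) ∉ E0 c)
    (hy : ∀ k : Fin 6, k ≠ 0 → k ≠ 3 → #{w | c w = k} ≤ y) :
    rank (perturb (Bgraph c) F) u v ≤ 2 * y := by
  obtain ⟨a, b, ha₀, ha₃, hb₀, hb₃, hcover⟩ :=
    E0Pair.exists_cover_of_not (mt mk_mem_E0_iff.mpr huv)
  calc rank (perturb (Bgraph c) F) u v ≤ #{w | c w = a ∨ c w = b} := by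
        refine rank_perturb_le_card (balancedTriad_Bgraph c u v) (fun h => huv (hF h)) ?_
        rintro w (h | h)
        · simpa using hcover _ (Or.inr (E0Pair_of_mem hF h))
        · simpa using hcover _ (Or.inl (E0Pair_of_mem hF h))
    _ ≤ #{w | c w = a} + #{w | c w = b} := by rw [filter_or]; exact card_union_le _ _
    _ ≤ 2 * y := by linarith [hy a ha₀ ha₃, hy b hb₀ hb₃]

end Clusters

/-- For `G_F` differing from the balanced state `B_n` exactly on `F ⊆ E_0`:
(a) no triad has all three edges in `F`; (b) every edge in `F` has rank at least `n/2 - 4`;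
(c) every edge outside `E_0` has rank at most `n/4 + 2`; (d) in every imbalanced triad,
every edge of maximal rank belongs to `E_0`. -/
theorem perturbed_Bn_ranks (n : ℕ) (hn : 72 ≤ n) (h8 : 8 ∣ n) (c : Fin n → Fin 6)
    (hc0 : (univ.filter (fun u => c u = 0)).card = n / 4 - 2)
    (hc3 : (univ.filter (fun u => c u = 3)).card = n / 4 - 2)
    (hc1 : (univ.filter (fun u => c u = 1)).card = n / 8 + 1)
    (hc2 : (univ.filter (fun u => c u = 2)).card = n / 8 + 1)
    (hc4 : (univ.filter (fun u => c u = 4)).card = n / 8 + 1)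
    (hc5 : (univ.filter (fun u => c u = 5)).card = n / 8 + 1)
    (F : Finset (Sym2 (Fin n))) (hF : F ⊆ diffEdges (circular c 1) (Bgraph c)) :
    (∀ u v w : Fin n, u ≠ v → v ≠ w → u ≠ w →
      ¬ (s(u, v) ∈ F ∧ s(v, w) ∈ F ∧ s(u, w) ∈ F)) ∧
    (∀ u v : Fin n, u ≠ v → s(u, v) ∈ F →
      (n : ℝ) / 2 - 4 ≤ (rank (perturb (Bgraph c) F) u v : ℝ)) ∧
    (∀ u v : Fin n, u ≠ v → s(u, v) ∉ diffEdges (circular c 1) (Bgraph c) →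
      (rank (perturb (Bgraph c) F) u v : ℝ) ≤ (n : ℝ) / 4 + 2) ∧
    (∀ u v w : Fin n, u ≠ v → w ≠ u → w ≠ v →
      ¬ BalancedTriad (perturb (Bgraph c) F) u v w →
      rank (perturb (Bgraph c) F) v w ≤ rank (perturb (Bgraph c) F) u v →
      rank (perturb (Bgraph c) F) u w ≤ rank (perturb (Bgraph c) F) u v →
      s(u, v) ∈ diffEdges (circular c 1) (Bgraph c)) := by
  obtain ⟨m, rfl⟩ := h8
  have red_ge (u v : Fin (8 * m)) (h : s(u, v) ∈ F) :
      4 * m ≤ rank (perturb (Bgraph c) F) u v + 4 := by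
    have := card_outer_le_rank_perturb_Bgraph hF h
    omega
  have blue_le (u v : Fin (8 * m)) (h : s(u, v) ∉ E0 c) :
      rank (perturb (Bgraph c) F) u v ≤ 2 * (m + 1) := by
    refine rank_perturb_Bgraph_le hF h fun k h₀ h₃ => ?_
    obtain rfl | rfl | rfl | rfl : k = 1 ∨ k = 2 ∨ k = 4 ∨ k = 5 := by revert k; decide
    all_goals omega
  refine ⟨fun u v w _ _ _ ⟨h₁, h₂, h₃⟩ => E0Pair.not_triangle (c u) (c v) (c w)
      ⟨E0Pair_of_mem hF h₁, E0Pair_of_mem hF h₂, E0Pair_of_mem hF h₃⟩,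
    fun u v _ h => ?_, fun u v _ h => ?_, fun u v w _ _ _ himb _ _ => ?_⟩
  · have : (4 * m : ℝ) ≤ rank (perturb (Bgraph c) F) u v + 4 := by exact_mod_cast red_ge u v h
    push_cast
    linarith
  · have : (rank (perturb (Bgraph c) F) u v : ℝ) ≤ 2 * (m + 1) := by exact_mod_cast blue_le u v h
    push_cast
    linarith
  · by_contra huv
    have := blue_le u v huv
    rcases mem_or_mem_of_not_balancedTriad_perturb (balancedTriad_Bgraph c u v w) himb
      (fun h => huv (hF h)) with h | h
    · have := red_ge v w h; omega
    · have := red_ge u w h; omega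
end
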